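/- Let • be a bilinear map on n×n complex matrices with right adjoint •_R defined by Tr((A • B)C) = Tr((B •_R C)A). If Σ_{i=1}^k σ_i(A • B) ≤ Σ_{i=1}^k σ_i(A)σ_i(B) holds for all A, B and all 1 ≤ k ≤ n, then σ_1(A •_R B) ≤ σ_1(A)σ_1(B) for all A, B. -/

import Mathlib

open Matrix Finset

/-- The `i`-th largest singular value of an `n × n` complex matrix
(indexed by `i : Fin n`, with `i = 0` the largest). -/
noncomputable def singularValue {n : ℕ} (A : Matrix (Fin n) (Fin n) ℂ) (i : Fin n) : ℝ :=
  Real.sqrt ((((Matrix.isHermitian_conjTranspose_mul_self A)).eigenvalues ∘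
    Tuple.sort ((Matrix.isHermitian_conjTranspose_mul_self A)).eigenvalues) i.rev)

/-- Euclidean norm of the `j`-th column of `Z`. -/
noncomputable def colNorm {n : ℕ} (Z : Matrix (Fin n) (Fin n) ℂ) (j : Fin n) : ℝ :=
  Real.sqrt (∑ k, ‖Z k j‖ ^ 2)

/-- The `i`-th largest column norm of `Z` (decreasingly ordered `c_i(Z)`). -/
noncomputable def colNormSorted {n : ℕ} (Z : Matrix (Fin n) (Fin n) ℂ) (i : Fin n) : ℝ :=
  (colNorm Z ∘ Tuple.sort (colNorm Z)) i.rev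

/-!
Write `f` for `•` and `g` for `•_R`. Given `A, B`, pick unit vectors `u, v` with
`Tr (g A B * u v*) = σ₁ (g A B)`: `u` a top eigenvector of `(g A B)ᴴ (g A B)` and `v` the
normalised image of `u`. By adjointness this trace is `Tr (f (u v*) A * B)`, and
`|Tr (M B)| ≤ σ₁ B · ∑ σᵢ M` (expand the trace in an eigenbasis of `Mᴴ M`, whose images under `M`
have norms `σᵢ M`). The Ky Fan hypothesis with `k = n` bounds `∑ σᵢ (f (u v*) A)` by
`∑ σᵢ (u v*) σᵢ A ≤ σ₁ A`, as `u v*` is a partial isometry whose singular values sum to `1`.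
-/

open scoped Matrix.Norms.L2Operator
open InnerProductSpace

section Euclidean

variable {𝕜 ι : Type*} [RCLike 𝕜] [Fintype ι] [DecidableEq ι]

lemma toEuclideanCLM_eigenvectorBasis {A : Matrix ι ι 𝕜} (hA : A.IsHermitian) (j : ι) :
    toEuclideanCLM (𝕜 := 𝕜) A (hA.eigenvectorBasis j) =
      (hA.eigenvalues j : 𝕜) • hA.eigenvectorBasis j :=
  WithLp.ofLp_injective 2 <| by
    rw [ofLp_toEuclideanCLM, hA.mulVec_eigenvectorBasis, WithLp.ofLp_smul,
      RCLike.real_smul_eq_coe_smul (K := 𝕜)]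

lemma norm_toEuclideanCLM_eigenvectorBasis (A : Matrix ι ι 𝕜) (j : ι) :
    ‖toEuclideanCLM (𝕜 := 𝕜) A ((isHermitian_conjTranspose_mul_self A).eigenvectorBasis j)‖ =
      √((isHermitian_conjTranspose_mul_self A).eigenvalues j) := by
  set hH := isHermitian_conjTranspose_mul_self A
  set b := hH.eigenvectorBasis j
  have hb : ⟪b, b⟫_𝕜 = 1 := by simp [b, inner_self_eq_norm_sq_to_K]
  rw [← Real.sqrt_sq (norm_nonneg _), ← inner_self_eq_norm_sq (𝕜 := 𝕜),
    ← ContinuousLinearMap.adjoint_inner_right, ← ContinuousLinearMap.star_eq_adjoint,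
    ← map_star, ← mul_apply_eq_comp, ← map_mul, star_eq_conjTranspose,
    toEuclideanCLM_eigenvectorBasis hH, inner_smul_right, hb, mul_one, RCLike.ofReal_re]

lemma trace_toEuclideanCLM (M : Matrix ι ι 𝕜) :
    LinearMap.trace 𝕜 _ (toEuclideanCLM (𝕜 := 𝕜) M : EuclideanSpace 𝕜 ι →ₗ[𝕜] _) = M.trace :=
  M.trace_toLin_eq (PiLp.basisFun 2 𝕜 ι)

lemma toEuclideanCLM_vecMulVec (u v : EuclideanSpace 𝕜 ι) :
    toEuclideanCLM (𝕜 := 𝕜) (vecMulVec u (star v)) = rankOne 𝕜 u v :=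
  ContinuousLinearMap.coe_injective <| by
    rw [coe_toEuclideanCLM_eq_toEuclideanLin, ← symm_toEuclideanLin_rankOne,
      LinearEquiv.apply_symm_apply]

lemma trace_mul_vecMulVec (X : Matrix ι ι 𝕜) (u v : EuclideanSpace 𝕜 ι) :
    (X * vecMulVec u (star v)).trace = ⟪v, toEuclideanCLM (𝕜 := 𝕜) X u⟫_𝕜 := by
  rw [← trace_toEuclideanCLM, map_mul, toEuclideanCLM_vecMulVec, ContinuousLinearMap.mul_def,
    comp_rankOne, trace_rankOne]

lemma conjTranspose_vecMulVec_mul_vecMulVec {u : EuclideanSpace 𝕜 ι} (hu : ‖u‖ = 1)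
    (v : EuclideanSpace 𝕜 ι) :
    (vecMulVec u (star v))ᴴ * vecMulVec u (star v) = vecMulVec v (star v) := by
  apply EquivLike.injective (toEuclideanCLM (𝕜 := 𝕜) (n := ι))
  rw [map_mul, ← star_eq_conjTranspose, map_star, toEuclideanCLM_vecMulVec,
    toEuclideanCLM_vecMulVec, ContinuousLinearMap.star_eq_adjoint, adjoint_rankOne,
    ContinuousLinearMap.mul_def, rankOne_comp_rankOne, inner_self_eq_norm_sq_to_K, hu]
  simp

end Euclidean

section SingularValue

variable {n : ℕ}

lemma singularValue_nonneg (A : Matrix (Fin n) (Fin n) ℂ) (i : Fin n) : 0 ≤ singularValue A i :=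
  Real.sqrt_nonneg _

lemma sq_singularValue (A : Matrix (Fin n) (Fin n) ℂ) (i : Fin n) :
    singularValue A i ^ 2 = (isHermitian_conjTranspose_mul_self A).eigenvalues
      (Tuple.sort (isHermitian_conjTranspose_mul_self A).eigenvalues i.rev) :=
  Real.sq_sqrt (eigenvalues_conjTranspose_mul_self_nonneg A _)

lemma antitone_singularValue (A : Matrix (Fin n) (Fin n) ℂ) : Antitone (singularValue A) :=
  fun _ _ hij ↦ Real.sqrt_le_sqrt <| Tuple.monotone_sort _ <| Fin.rev_le_rev.mpr hij

lemma sum_singularValue (A : Matrix (Fin n) (Fin n) ℂ) :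
    ∑ i, singularValue A i = ∑ j, √((isHermitian_conjTranspose_mul_self A).eigenvalues j) :=
  Equiv.sum_comp (Fin.revPerm.trans (Tuple.sort _))
    (fun j ↦ √((isHermitian_conjTranspose_mul_self A).eigenvalues j))

lemma eigenvalues_le_singularValue_zero_sq (hn : 0 < n) (A : Matrix (Fin n) (Fin n) ℂ)
    (j : Fin n) :
    (isHermitian_conjTranspose_mul_self A).eigenvalues j ≤ singularValue A ⟨0, hn⟩ ^ 2 := by
  set μ := (isHermitian_conjTranspose_mul_self A).eigenvalues
  rw [sq_singularValue]
  calc μ j = (μ ∘ Tuple.sort μ) ((Tuple.sort μ).symm j) := by simp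
    _ ≤ _ := Tuple.monotone_sort μ <| Fin.le_def.mpr (by simp [Fin.val_rev]; omega)

lemma exists_eigenvalues_eq_singularValue_zero_sq (hn : 0 < n) (A : Matrix (Fin n) (Fin n) ℂ) :
    ∃ j, (isHermitian_conjTranspose_mul_self A).eigenvalues j = singularValue A ⟨0, hn⟩ ^ 2 :=
  ⟨_, (sq_singularValue A _).symm⟩

/-- `‖A‖² = ‖Aᴴ A‖` by the C⋆-identity, and conjugating `Aᴴ A` by its eigenvector unitary leaves
the diagonal matrix of its eigenvalues, whose norm is their maximum. -/
lemma singularValue_zero_eq_l2_opNorm (hn : 0 < n) (A : Matrix (Fin n) (Fin n) ℂ) :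
    singularValue A ⟨0, hn⟩ = ‖A‖ := by
  set hH := isHermitian_conjTranspose_mul_self A
  have hdiag : ‖(RCLike.ofReal ∘ hH.eigenvalues : Fin n → ℂ)‖ = singularValue A ⟨0, hn⟩ ^ 2 := by
    obtain ⟨j, hj⟩ := exists_eigenvalues_eq_singularValue_zero_sq hn A
    refine le_antisymm ((pi_norm_le_iff_of_nonneg (sq_nonneg _)).mpr fun i ↦ ?_) ?_
    · simpa [abs_of_nonneg (eigenvalues_conjTranspose_mul_self_nonneg A i)]
        using eigenvalues_le_singularValue_zero_sq hn A i
    · simpa [← hj, abs_of_nonneg (eigenvalues_conjTranspose_mul_self_nonneg A j)]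
        using norm_le_pi_norm (RCLike.ofReal ∘ hH.eigenvalues : Fin n → ℂ) j
  have hsq : ‖A‖ ^ 2 = singularValue A ⟨0, hn⟩ ^ 2 := by
    rw [sq, ← l2_opNorm_conjTranspose_mul_self, hH.spectral_theorem, Unitary.conjStarAlgAut_apply,
      ← Unitary.coe_star, CStarRing.norm_mul_coe_unitary, CStarRing.norm_coe_unitary_mul,
      l2_opNorm_diagonal, hdiag]
  exact (sq_eq_sq₀ (singularValue_nonneg A _) (norm_nonneg A)).mp hsq.symm

lemma norm_trace_mul_le (hn : 0 < n) (M B : Matrix (Fin n) (Fin n) ℂ) :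
    ‖(M * B).trace‖ ≤ singularValue B ⟨0, hn⟩ * ∑ i, singularValue M i := by
  set hH := isHermitian_conjTranspose_mul_self M
  set b := hH.eigenvectorBasis
  rw [trace_mul_comm, ← trace_toEuclideanCLM, LinearMap.trace_eq_sum_inner _ b,
    sum_singularValue, Finset.mul_sum]
  refine (norm_sum_le _ _).trans (Finset.sum_le_sum fun j _ ↦ ?_)
  calc ‖⟪b j, toEuclideanCLM (𝕜 := ℂ) (B * M) (b j)⟫_ℂ‖
      ≤ ‖b j‖ * ‖toEuclideanCLM (𝕜 := ℂ) B (toEuclideanCLM (𝕜 := ℂ) M (b j))‖ := by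
        rw [map_mul]; exact norm_inner_le_norm _ _
    _ ≤ ‖B‖ * ‖toEuclideanCLM (𝕜 := ℂ) M (b j)‖ := by
        rw [b.orthonormal.1 j, one_mul]; exact (toEuclideanCLM (𝕜 := ℂ) B).le_opNorm _
    _ = singularValue B ⟨0, hn⟩ * √(hH.eigenvalues j) := by
        rw [singularValue_zero_eq_l2_opNorm, norm_toEuclideanCLM_eigenvectorBasis]

lemma sum_singularValue_mul_le (hn : 0 < n) (C A : Matrix (Fin n) (Fin n) ℂ) :
    ∑ i, singularValue C i * singularValue A i ≤
      (∑ i, singularValue C i) * singularValue A ⟨0, hn⟩ := by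
  rw [Finset.sum_mul]
  exact Finset.sum_le_sum fun i _ ↦ mul_le_mul_of_nonneg_left
    (antitone_singularValue A (Fin.le_def.mpr (Nat.zero_le _))) (singularValue_nonneg C i)

lemma sum_singularValue_of_isIdempotentElem (A : Matrix (Fin n) (Fin n) ℂ)
    (h : IsIdempotentElem (Aᴴ * A)) : ((∑ i, singularValue A i : ℝ) : ℂ) = (Aᴴ * A).trace := by
  rw [sum_singularValue, (isHermitian_conjTranspose_mul_self A).trace_eq_sum_eigenvalues]
  push_cast
  refine Finset.sum_congr rfl fun j _ ↦ ?_
  rcases h.spectrum_subset ℝ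
      ((isHermitian_conjTranspose_mul_self A).eigenvalues_mem_spectrum_real j) with h0 | h1
  · simp [h0]
  · simp [Set.mem_singleton_iff.mp h1]

lemma sum_singularValue_vecMulVec {u v : EuclideanSpace ℂ (Fin n)} (hu : ‖u‖ = 1)
    (hv : ‖v‖ = 1) : ∑ i, singularValue (vecMulVec u (star v)) i = 1 := by
  have hidem : IsIdempotentElem (vecMulVec v (star v)) := by
    simpa only [← toEuclideanCLM_vecMulVec, StarAlgEquiv.symm_apply_apply] using
      (isIdempotentElem_rankOne_self (𝕜 := ℂ) hv).map (toEuclideanCLM (𝕜 := ℂ) (n := Fin n)).symm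
  have htr : (vecMulVec v (star v)).trace = 1 := by
    rw [trace_vecMulVec, ← EuclideanSpace.inner_eq_star_dotProduct, inner_self_eq_norm_sq_to_K, hv]
    simp
  rw [← conjTranspose_vecMulVec_mul_vecMulVec hu] at hidem htr
  exact_mod_cast (sum_singularValue_of_isIdempotentElem _ hidem).trans htr

lemma exists_norm_toEuclideanCLM_eq_singularValue_zero (hn : 0 < n)
    (X : Matrix (Fin n) (Fin n) ℂ) :
    ∃ u : EuclideanSpace ℂ (Fin n), ‖u‖ = 1 ∧
      ‖toEuclideanCLM (𝕜 := ℂ) X u‖ = singularValue X ⟨0, hn⟩ := by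
  obtain ⟨j, hj⟩ := exists_eigenvalues_eq_singularValue_zero_sq hn X
  refine ⟨_, (isHermitian_conjTranspose_mul_self X).eigenvectorBasis.orthonormal.1 j, ?_⟩
  rw [norm_toEuclideanCLM_eigenvectorBasis, hj, Real.sqrt_sq (singularValue_nonneg X _)]

lemma exists_trace_mul_vecMulVec_eq_singularValue_zero (hn : 0 < n)
    (X : Matrix (Fin n) (Fin n) ℂ) :
    ∃ u v : EuclideanSpace ℂ (Fin n), ‖u‖ = 1 ∧ ‖v‖ = 1 ∧
      (X * vecMulVec u (star v)).trace = singularValue X ⟨0, hn⟩ := by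
  obtain ⟨u, hu, hXu⟩ := exists_norm_toEuclideanCLM_eq_singularValue_zero hn X
  set w := toEuclideanCLM (𝕜 := ℂ) X u with hw_def
  rcases eq_or_ne w 0 with hw | hw
  · refine ⟨u, u, hu, hu, ?_⟩
    rw [trace_mul_vecMulVec, ← hXu, ← hw_def, hw, inner_zero_right, norm_zero,
      Complex.ofReal_zero]
  · refine ⟨u, (‖w‖⁻¹ : ℂ) • w, hu, norm_smul_inv_norm hw, ?_⟩
    rw [trace_mul_vecMulVec, ← hw_def, inner_smul_left, inner_self_eq_norm_sq_to_K, ← hXu]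
    simp [sq, hw]

end SingularValue

theorem horn_mathias_opNorm_of_kyFan {n : ℕ} (hn : 0 < n)
    (f g : Matrix (Fin n) (Fin n) ℂ →ₗ[ℂ] Matrix (Fin n) (Fin n) ℂ →ₗ[ℂ]
      Matrix (Fin n) (Fin n) ℂ)
    (hadj : ∀ A B C : Matrix (Fin n) (Fin n) ℂ,
      (f A B * C).trace = (g B C * A).trace)
    (h : ∀ A B : Matrix (Fin n) (Fin n) ℂ, ∀ k : ℕ, 1 ≤ k → k ≤ n →
      ∑ i ∈ Finset.univ.filter (fun i : Fin n => (i : ℕ) < k), singularValue (f A B) i ≤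
        ∑ i ∈ Finset.univ.filter (fun i : Fin n => (i : ℕ) < k),
          singularValue A i * singularValue B i) :
    ∀ A B : Matrix (Fin n) (Fin n) ℂ,
      singularValue (g A B) ⟨0, hn⟩ ≤
        singularValue A ⟨0, hn⟩ * singularValue B ⟨0, hn⟩ := by
  intro A B
  obtain ⟨u, v, hu, hv, htr⟩ := exists_trace_mul_vecMulVec_eq_singularValue_zero hn (g A B)
  set C : Matrix (Fin n) (Fin n) ℂ := vecMulVec u (star v)
  have hkyFan : ∑ i, singularValue (f C A) i ≤ ∑ i, singularValue C i * singularValue A i := by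
    simpa only [Finset.filter_true_of_mem fun (i : Fin n) _ ↦ i.isLt] using h C A n hn le_rfl
  calc singularValue (g A B) ⟨0, hn⟩ = ‖(f C A * B).trace‖ := by
        rw [hadj, htr, Complex.norm_real, Real.norm_of_nonneg (singularValue_nonneg _ _)]
    _ ≤ singularValue B ⟨0, hn⟩ * ∑ i, singularValue (f C A) i := norm_trace_mul_le hn _ _
    _ ≤ singularValue B ⟨0, hn⟩ * ((∑ i, singularValue C i) * singularValue A ⟨0, hn⟩) :=
        mul_le_mul_of_nonneg_left (hkyFan.trans (sum_singularValue_mul_le hn C A))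
          (singularValue_nonneg B _)
    _ = singularValue A ⟨0, hn⟩ * singularValue B ⟨0, hn⟩ := by
        rw [sum_singularValue_vecMulVec hu hv, one_mul, mul_comm]
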